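/- arXiv:0903.3394 — 5 statements merged into one kernel-verified Lean document; each statement's English description precedes it below -/
import Mathlib

section
/- For all real numbers β, γ > 0 with β + γ = 2, and all non-negative real numbers a, b, one has (a^β − b^β)(a^γ − b^γ) ≥ βγ(a − b)². -/
/-!
Write `a = exp (m + d)`, `b = exp (m - d)` and `β = 1 + s`, `γ = 1 - s` with `|s| ≤ 1`. Then
`a ^ θ - b ^ θ = 2 exp (θ m) sinh (θ d)`, and since `sinh (d + s d) sinh (d - s d) = sinh² d - sinh² (s d)`
the inequality reduces to `|sinh (s d)| ≤ |s| |sinh d|`, which is the convexity of `sinh` on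
`[0, ∞)` together with `sinh 0 = 0`. The case `a = 0` or `b = 0` is `a ^ β a ^ γ = a ^ 2` and
`β γ ≤ ((β + γ) / 2) ^ 2 = 1`.
-/

open Real Set

theorem convexOn_sinh : ConvexOn ℝ (Ici 0) sinh := by
  refine MonotoneOn.convexOn_of_deriv (convex_Ici 0) continuous_sinh.continuousOn
    differentiable_sinh.differentiableOn ?_
  rw [Real.deriv_sinh, interior_Ici]
  intro x hx y hy hxy
  rwa [cosh_le_cosh, abs_of_pos hx, abs_of_pos hy]

theorem sinh_mul_le_mul_sinh {s x : ℝ} (hs₀ : 0 ≤ s) (hs₁ : s ≤ 1) (hx : 0 ≤ x) :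
    sinh (s * x) ≤ s * sinh x := by
  simpa using convexOn_sinh.2 (mem_Ici.2 le_rfl) (mem_Ici.2 hx) (sub_nonneg.2 hs₁) hs₀
    (sub_add_cancel 1 s)

theorem sinh_mul_sq_le {s : ℝ} (hs : |s| ≤ 1) (x : ℝ) :
    sinh (s * x) ^ 2 ≤ s ^ 2 * sinh x ^ 2 := by
  have h := sinh_mul_le_mul_sinh (abs_nonneg s) hs (abs_nonneg x)
  have h₀ : 0 ≤ sinh (|s| * |x|) := sinh_nonneg_iff.2 (by positivity)
  calc sinh (s * x) ^ 2 = sinh (|s| * |x|) ^ 2 := by rw [← abs_mul, ← sq_abs, abs_sinh]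
    _ ≤ (|s| * sinh |x|) ^ 2 := pow_le_pow_left₀ h₀ h 2
    _ = s ^ 2 * sinh x ^ 2 := by rw [mul_pow, sq_abs, ← abs_sinh, sq_abs]

theorem sinh_add_mul_sinh_sub (x y : ℝ) :
    sinh (x + y) * sinh (x - y) = sinh x ^ 2 - sinh y ^ 2 := by
  rw [sinh_add, sinh_sub]
  linear_combination sinh x ^ 2 * cosh_sq y - sinh y ^ 2 * cosh_sq x

theorem mul_mul_sinh_sq_le_sinh_mul_sinh {β γ : ℝ} (hβ : 0 ≤ β) (hγ : 0 ≤ γ) (hβγ : β + γ = 2)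
    (d : ℝ) : β * γ * sinh d ^ 2 ≤ sinh (β * d) * sinh (γ * d) := by
  have hs : |β - 1| ≤ 1 := abs_le.2 ⟨by linarith, by linarith⟩
  have hβd : β * d = d + (β - 1) * d := by ring
  have hγd : γ * d = d - (β - 1) * d := by linear_combination d * hβγ
  rw [hβd, hγd, sinh_add_mul_sinh_sub]
  linear_combination sinh_mul_sq_le hs d + β * sinh d ^ 2 * hβγ

theorem exp_add_sub_exp_sub (m d : ℝ) : exp (m + d) - exp (m - d) = 2 * exp m * sinh d := by
  rw [sinh_eq, sub_eq_add_neg m, exp_add, exp_add]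
  ring

theorem mul_mul_sq_exp_sub_exp_le {β γ : ℝ} (hβ : 0 ≤ β) (hγ : 0 ≤ γ) (hβγ : β + γ = 2)
    (x y : ℝ) :
    β * γ * (exp x - exp y) ^ 2 ≤ (exp (β * x) - exp (β * y)) * (exp (γ * x) - exp (γ * y)) := by
  obtain ⟨m, d, rfl, rfl⟩ : ∃ m d, x = m + d ∧ y = m - d :=
    ⟨(x + y) / 2, (x - y) / 2, by ring, by ring⟩
  have hθ : ∀ θ, exp (θ * (m + d)) - exp (θ * (m - d)) = 2 * exp (θ * m) * sinh (θ * d) :=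
    fun θ => by rw [mul_add, mul_sub, exp_add_sub_exp_sub]
  have hm : exp (β * m) * exp (γ * m) = exp m ^ 2 := by
    rw [← exp_add, ← add_mul, hβγ, two_mul, exp_add, sq]
  calc β * γ * (exp (m + d) - exp (m - d)) ^ 2 = 4 * exp m ^ 2 * (β * γ * sinh d ^ 2) := by
        rw [exp_add_sub_exp_sub]; ring
    _ ≤ 4 * exp m ^ 2 * (sinh (β * d) * sinh (γ * d)) :=
        mul_le_mul_of_nonneg_left (mul_mul_sinh_sq_le_sinh_mul_sinh hβ hγ hβγ d) (by positivity)
    _ = _ := by rw [hθ, hθ, ← hm]; ring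

theorem mul_mul_sq_le_rpow_mul_rpow {β γ : ℝ} (hβγ : β + γ = 2) {a : ℝ} (ha : 0 ≤ a) :
    β * γ * a ^ 2 ≤ a ^ β * a ^ γ := by
  rw [← rpow_add' ha (by rw [hβγ]; norm_num), hβγ, rpow_two]
  have : β * γ ≤ 1 := by nlinarith [sq_nonneg (β - γ)]
  nlinarith [sq_nonneg a]

theorem stmt_0 (β γ : ℝ) (hβ : 0 < β) (hγ : 0 < γ) (hβγ : β + γ = 2)
    (a b : ℝ) (ha : 0 ≤ a) (hb : 0 ≤ b) :
    (a ^ β - b ^ β) * (a ^ γ - b ^ γ) ≥ β * γ * (a - b) ^ 2 := by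
  rcases ha.eq_or_lt with rfl | ha
  · rw [zero_rpow hβ.ne', zero_rpow hγ.ne']
    linear_combination mul_mul_sq_le_rpow_mul_rpow hβγ hb
  rcases hb.eq_or_lt with rfl | hb
  · rw [zero_rpow hβ.ne', zero_rpow hγ.ne']
    linear_combination mul_mul_sq_le_rpow_mul_rpow hβγ ha.le
  have h := mul_mul_sq_exp_sub_exp_le hβ.le hγ.le hβγ (log a) (log b)
  simpa only [exp_log ha, exp_log hb, mul_comm _ (log _), ← rpow_def_of_pos ha,
    ← rpow_def_of_pos hb] using h
end

section
/- Let v : ℝ → ℝ be bounded, non-negative, even, and non-increasing on (0, +∞). Assume there exists ℓ > 0 such that for every x₀ > 1/2, the limit as n → ∞ of n⁻¹ ∫_{n(x₀−1/2)}^{n(x₀+1/2)} y² v(y) dy equals ℓ. Then y² v(y) → ℓ as |y| → +∞. -/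
open Filter MeasureTheory

private lemma aux_int (v : ℝ → ℝ)
    (hmono : ∀ ⦃x y : ℝ⦄, 0 < x → x ≤ y → v y ≤ v x)
    (a b : ℝ) (ha : 0 < a) (hab : a ≤ b) :
    IntervalIntegrable (fun y => y^2 * v y) volume a b := by
  have hv : IntervalIntegrable v volume a b := by
    apply AntitoneOn.intervalIntegrable
    intro x hx y hy hxy
    rw [Set.uIcc_of_le hab] at hx hy
    exact hmono (lt_of_lt_of_le ha hx.1) hxy
  exact hv.continuousOn_mul ((continuous_pow 2).continuousOn)

private lemma aux_bounds (v : ℝ → ℝ)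
    (hmono : ∀ ⦃x y : ℝ⦄, 0 < x → x ≤ y → v y ≤ v x)
    (a b : ℝ) (ha : 0 < a) (hab : a ≤ b) :
    v b * ((b^3 - a^3)/3) ≤ (∫ y in a..b, y^2 * v y) ∧
      (∫ y in a..b, y^2 * v y) ≤ v a * ((b^3 - a^3)/3) := by
  have hint := aux_int v hmono a b ha hab
  have hcb : IntervalIntegrable (fun y : ℝ => y^2 * v b) volume a b :=
    (Continuous.intervalIntegrable (by continuity) a b)
  have hca : IntervalIntegrable (fun y : ℝ => y^2 * v a) volume a b :=
    (Continuous.intervalIntegrable (by continuity) a b)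
  have hvb : ∫ y in a..b, y^2 * v b = (b^3 - a^3)/3 * v b := by
    rw [intervalIntegral.integral_mul_const, integral_pow]
    norm_num
  have hva : ∫ y in a..b, y^2 * v a = (b^3 - a^3)/3 * v a := by
    rw [intervalIntegral.integral_mul_const, integral_pow]
    norm_num
  constructor
  · have h1 : (∫ y in a..b, y^2 * v b) ≤ ∫ y in a..b, y^2 * v y := by
      apply intervalIntegral.integral_mono_on hab hcb hint
      intro x hx
      have hx0 : 0 < x := lt_of_lt_of_le ha hx.1
      exact mul_le_mul_of_nonneg_left (hmono hx0 hx.2) (sq_nonneg x)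
    rw [hvb] at h1
    linarith
  · have h1 : (∫ y in a..b, y^2 * v y) ≤ ∫ y in a..b, y^2 * v a := by
      apply intervalIntegral.integral_mono_on hab hint hca
      intro x hx
      have hx0 : 0 < x := lt_of_lt_of_le ha hx.1
      exact mul_le_mul_of_nonneg_left (hmono ha hx.1) (sq_nonneg x)
    rw [hva] at h1
    linarith

set_option maxHeartbeats 1000000 in
private lemma aux_upper (v : ℝ → ℝ) (hnonneg : ∀ y, 0 ≤ v y)
    (hmono : ∀ ⦃x y : ℝ⦄, 0 < x → x ≤ y → v y ≤ v x)
    (ℓ : ℝ) (hℓ : 0 < ℓ)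
    (hlim : ∀ x₀ : ℝ, 1/2 < x₀ →
      Tendsto (fun n : ℕ =>
          (n : ℝ)⁻¹ * ∫ y in ((n : ℝ) * (x₀ - 1/2))..((n : ℝ) * (x₀ + 1/2)), y^2 * v y)
        atTop (nhds ℓ))
    (ε : ℝ) (hε : 0 < ε) :
    ∀ᶠ y : ℝ in atTop, y^2 * v y ≤ ℓ + ε := by
  set δ : ℝ := min 1 (ε/(7*ℓ+8)) with hδdef
  have hδ0 : 0 < δ := by rw [hδdef]; exact lt_min one_pos (by positivity)
  have hδ1 : δ ≤ 1 := min_le_left _ _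
  have hδε : δ*(7*ℓ+8) ≤ ε := by
    have h := min_le_right 1 (ε/(7*ℓ+8))
    have h78 : (0:ℝ) < 7*ℓ+8 := by linarith
    calc δ*(7*ℓ+8) ≤ (ε/(7*ℓ+8))*(7*ℓ+8) := by
          exact mul_le_mul_of_nonneg_right h h78.le
      _ = ε := by field_simp
  clear_value δ
  set t : ℝ := 1 + 1/δ with ht
  have ht1 : 1 < t := by
    have : 0 < 1/δ := by positivity
    rw [ht]; linarith
  have ht0 : 0 < t := by linarith
  clear_value t
  set c : ℝ := t^2 - t + 1/3 with hcdef
  clear_value c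
  have hc0 : 0 < c := by linarith only [hcdef, mul_pos ht0 (sub_pos.2 ht1)]
  have hδt : δ * t = δ + 1 := by
    rw [ht]; field_simp
  have ht2 : t^2 ≤ (1+δ)*c := by
    have hkey : (1+δ)*c - t^2 = (1+δ)/3 + (δ*t - (1+δ))*t := by rw [hcdef]; ring
    have : δ*t - (1+δ) = 0 := by rw [hδt]; ring
    rw [this] at hkey
    linarith only [hkey, hδ0]
  have hlim' := hlim (t - 1/2) (by linarith)
  have e1 : t - 1/2 - 1/2 = t - 1 := by ring
  have e2 : t - 1/2 + 1/2 = t := by ring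
  rw [e1, e2] at hlim'
  have hA : ∀ᶠ n : ℕ in atTop,
      (n:ℝ)⁻¹ * ∫ y in ((n:ℝ)*(t-1))..((n:ℝ)*t), y^2 * v y ≤ ℓ + δ := by
    have := hlim'.eventually (eventually_lt_nhds (show ℓ < ℓ + δ by linarith))
    exact this.mono fun n h => h.le
  obtain ⟨N, hN⟩ := eventually_atTop.1 hA
  refine eventually_atTop.2 ⟨t * ((N:ℝ) + 1/δ + 1), ?_⟩
  intro y hy
  have hNnn : (0:ℝ) ≤ (N:ℝ) := Nat.cast_nonneg N
  have h1δ0 : 0 < 1/δ := by positivity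
  have hy0 : 0 < y := lt_of_lt_of_le (by positivity) hy
  set n : ℕ := ⌊y / t⌋₊ with hn
  have hyt : (0:ℝ) ≤ y/t := by positivity
  have hfle : (n:ℝ) ≤ y/t := Nat.floor_le hyt
  have hflt : y/t < (n:ℝ) + 1 := Nat.lt_floor_add_one (y/t)
  have h1 : (n:ℝ) * t ≤ y := by
    calc (n:ℝ)*t ≤ (y/t)*t := mul_le_mul_of_nonneg_right hfle ht0.le
      _ = y := by field_simp
  have h2 : y < ((n:ℝ)+1) * t := by
    calc y = (y/t)*t := by field_simp
      _ < ((n:ℝ)+1)*t := by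
          exact mul_lt_mul_of_pos_right hflt ht0
  have hydiv : (N:ℝ) + 1/δ + 1 ≤ y/t := by
    rw [le_div_iff₀ ht0]
    calc ((N:ℝ) + 1/δ + 1) * t = t * ((N:ℝ) + 1/δ + 1) := by ring
      _ ≤ y := hy
  have hnN : N ≤ n := by
    apply Nat.le_floor
    calc (N:ℝ) ≤ (N:ℝ) + 1/δ + 1 := by linarith
      _ ≤ y/t := hydiv
  clear_value n
  have hnδ : 1/δ ≤ (n:ℝ) := by
    have : (N:ℝ) + 1/δ + 1 < (n:ℝ) + 1 := lt_of_le_of_lt hydiv hflt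
    linarith
  have hn1 : 0 < (n:ℝ) := lt_of_lt_of_le h1δ0 hnδ
  have h1δ : 1 ≤ (n:ℝ) * δ := by
    rw [div_le_iff₀ hδ0] at hnδ
    linarith
  have hnt0 : 0 < (n:ℝ)*t := by positivity
  have hAn := hN n hnN
  have hIb := (aux_bounds v hmono ((n:ℝ)*(t-1)) ((n:ℝ)*t)
    (mul_pos hn1 (by linarith))
    (mul_le_mul_of_nonneg_left (by linarith) hn1.le)).1
  have hImul := mul_le_mul_of_nonneg_left hAn hn1.le
  rw [← mul_assoc, mul_inv_cancel₀ hn1.ne', one_mul] at hImul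
  have hcube : (((n:ℝ)*t)^3 - ((n:ℝ)*(t-1))^3)/3 = (n:ℝ)^3 * c := by
    rw [hcdef]; ring
  rw [hcube] at hIb
  have h3 : v ((n:ℝ)*t) * ((n:ℝ)^3 * c) ≤ (n:ℝ)*(ℓ+δ) := le_trans hIb hImul
  have key : v ((n:ℝ)*t) * ((n:ℝ)^2 * c) ≤ ℓ + δ := by
    have h4 : (v ((n:ℝ)*t) * ((n:ℝ)^2*c)) * (n:ℝ) ≤ (ℓ+δ) * (n:ℝ) := by
      have heq : (v ((n:ℝ)*t) * ((n:ℝ)^2*c)) * (n:ℝ)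
          = v ((n:ℝ)*t) * ((n:ℝ)^3*c) := by ring
      rw [heq]
      linarith
    exact le_of_mul_le_mul_right h4 hn1
  have hv_y : v y ≤ v ((n:ℝ)*t) := hmono hnt0 h1
  have hy2 : y^2 ≤ (((n:ℝ)+1)*t)^2 := pow_le_pow_left₀ hy0.le h2.le 2
  have step1 : y^2 * v y ≤ (((n:ℝ)+1)*t)^2 * v ((n:ℝ)*t) :=
    mul_le_mul hy2 hv_y (hnonneg y) (sq_nonneg _)
  have hle : (n:ℝ)+1 ≤ (1+δ)*(n:ℝ) := by
    have e : (1+δ)*(n:ℝ) = (n:ℝ) + (n:ℝ)*δ := by ring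
    linarith only [e, h1δ]
  have ha : ((n:ℝ)+1)^2 ≤ ((1+δ)*(n:ℝ))^2 := pow_le_pow_left₀ (by positivity) hle 2
  have hfac : (((n:ℝ)+1)*t)^2 ≤ (1+δ)^3 * ((n:ℝ)^2 * c) := by
    have hmm := mul_le_mul ha ht2 (sq_nonneg t) (sq_nonneg _)
    calc (((n:ℝ)+1)*t)^2 = ((n:ℝ)+1)^2 * t^2 := by ring
      _ ≤ ((1+δ)*(n:ℝ))^2 * ((1+δ)*c) := hmm
      _ = (1+δ)^3 * ((n:ℝ)^2*c) := by ring
  have step2 : (((n:ℝ)+1)*t)^2 * v ((n:ℝ)*t) ≤ (1+δ)^3 * (ℓ+δ) := by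
    calc (((n:ℝ)+1)*t)^2 * v ((n:ℝ)*t)
        ≤ ((1+δ)^3 * ((n:ℝ)^2*c)) * v ((n:ℝ)*t) :=
          mul_le_mul_of_nonneg_right hfac (hnonneg _)
      _ = (1+δ)^3 * (v ((n:ℝ)*t) * ((n:ℝ)^2*c)) := by ring
      _ ≤ (1+δ)^3 * (ℓ+δ) := by
          apply mul_le_mul_of_nonneg_left key
          positivity
  have final : (1+δ)^3 * (ℓ+δ) ≤ ℓ + ε := by
    have hcub : (1+δ)^3 ≤ 1 + 7*δ := by
      have e : (1 + 7*δ) - (1+δ)^3 = δ*((1-δ)*(δ+4)) := by ring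
      have h0 : 0 ≤ δ*((1-δ)*(δ+4)) :=
        mul_nonneg hδ0.le (mul_nonneg (by linarith only [hδ1]) (by linarith only [hδ0]))
      linarith only [e, h0]
    have hmul : (1+δ)^3 * (ℓ+δ) ≤ (1 + 7*δ) * (ℓ+δ) :=
      mul_le_mul_of_nonneg_right hcub (by linarith only [hδ0, hℓ])
    have e2 : (1 + 7*δ)*(ℓ+δ) = ℓ + δ*(7*ℓ+8) - 7*δ + 7*δ^2 := by ring
    have hsq : δ^2 ≤ δ := by
      have e3 : δ - δ^2 = δ*(1-δ) := by ring
      have h0 : 0 ≤ δ*(1-δ) := mul_nonneg hδ0.le (by linarith only [hδ1])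
      linarith only [e3, h0]
    linarith only [hmul, e2, hδε, hsq]
  linarith

set_option maxHeartbeats 1000000 in
private lemma aux_lower (v : ℝ → ℝ) (hnonneg : ∀ y, 0 ≤ v y)
    (hmono : ∀ ⦃x y : ℝ⦄, 0 < x → x ≤ y → v y ≤ v x)
    (ℓ : ℝ) (hℓ : 0 < ℓ)
    (hlim : ∀ x₀ : ℝ, 1/2 < x₀ →
      Tendsto (fun n : ℕ =>
          (n : ℝ)⁻¹ * ∫ y in ((n : ℝ) * (x₀ - 1/2))..((n : ℝ) * (x₀ + 1/2)), y^2 * v y)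
        atTop (nhds ℓ))
    (ε : ℝ) (hε : 0 < ε) :
    ∀ᶠ y : ℝ in atTop, ℓ - ε ≤ y^2 * v y := by
  set δ : ℝ := min (min 1 ℓ) (ε/(3*ℓ+1)) with hδdef
  have hδ0 : 0 < δ := by rw [hδdef]; exact lt_min (lt_min one_pos hℓ) (by positivity)
  have hδ1 : δ ≤ 1 := le_trans (min_le_left _ _) (min_le_left _ _)
  have hδℓ : δ ≤ ℓ := le_trans (min_le_left _ _) (min_le_right _ _)
  have hδε : δ*(3*ℓ+1) ≤ ε := by
    have h := min_le_right (min 1 ℓ) (ε/(3*ℓ+1))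
    have h31 : (0:ℝ) < 3*ℓ+1 := by linarith
    calc δ*(3*ℓ+1) ≤ (ε/(3*ℓ+1))*(3*ℓ+1) := mul_le_mul_of_nonneg_right h h31.le
      _ = ε := by field_simp
  clear_value δ
  set s : ℝ := 2/δ with hs
  have hs0 : 0 < s := by positivity
  have hδs : δ * s = 2 := by rw [hs]; field_simp
  have hs2' : 2 ≤ s := by
    rw [hs, le_div_iff₀ hδ0]; linarith
  clear_value s
  set d : ℝ := s^2 + s + 1/3 with hd
  clear_value d
  have hd0 : 0 < d := by linarith only [hd, sq_nonneg s, hs0]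
  have hδs2 : δ * s^2 = 2*s := by
    have h : δ*s^2 = (δ*s)*s := by ring
    rw [h, hδs]
  have hs2 : (1-δ)*d ≤ s^2 := by
    have expand : s^2 - (1-δ)*d = δ*s^2 - (1-δ)*s - (1-δ)/3 := by rw [hd]; ring
    linarith only [expand, hδs2, hδs, hs2', hδ1, hδ0]
  have hlim' := hlim (s + 1/2) (by linarith)
  have e1 : s + 1/2 - 1/2 = s := by ring
  have e2 : s + 1/2 + 1/2 = s + 1 := by ring
  rw [e1, e2] at hlim'
  have hA : ∀ᶠ n : ℕ in atTop,
      ℓ - δ ≤ (n:ℝ)⁻¹ * ∫ y in ((n:ℝ)*s)..((n:ℝ)*(s+1)), y^2 * v y := by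
    have := hlim'.eventually (eventually_gt_nhds (show ℓ - δ < ℓ by linarith))
    exact this.mono fun n h => h.le
  obtain ⟨N, hN⟩ := eventually_atTop.1 hA
  refine eventually_atTop.2 ⟨s * ((N:ℝ) + 1/δ + 1), ?_⟩
  intro y hy
  have hNnn : (0:ℝ) ≤ (N:ℝ) := Nat.cast_nonneg N
  have h1δ0 : 0 < 1/δ := by positivity
  have hy0 : 0 < y := lt_of_lt_of_le (by positivity) hy
  set n : ℕ := ⌈y / s⌉₊ with hn
  have hys : (0:ℝ) ≤ y/s := by positivity
  have hcle : y/s ≤ (n:ℝ) := Nat.le_ceil (y/s)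
  have hclt : (n:ℝ) < y/s + 1 := Nat.ceil_lt_add_one hys
  have h1 : y ≤ (n:ℝ) * s := by
    calc y = (y/s)*s := by field_simp
      _ ≤ (n:ℝ)*s := mul_le_mul_of_nonneg_right hcle hs0.le
  have h2 : ((n:ℝ)-1) * s ≤ y := by
    have : ((n:ℝ)-1)*s ≤ (y/s)*s := by
      apply mul_le_mul_of_nonneg_right _ hs0.le
      linarith
    calc ((n:ℝ)-1)*s ≤ (y/s)*s := this
      _ = y := by field_simp
  have hydiv : (N:ℝ) + 1/δ + 1 ≤ y/s := by
    rw [le_div_iff₀ hs0]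
    calc ((N:ℝ) + 1/δ + 1) * s = s * ((N:ℝ) + 1/δ + 1) := by ring
      _ ≤ y := hy
  have hnN : N ≤ n := by
    have hNr : (N:ℝ) ≤ (n:ℝ) := by
      calc (N:ℝ) ≤ (N:ℝ) + 1/δ + 1 := by linarith
        _ ≤ y/s := hydiv
        _ ≤ (n:ℝ) := hcle
    exact_mod_cast hNr
  clear_value n
  have hnδ : 1/δ ≤ (n:ℝ) := by
    calc 1/δ ≤ (N:ℝ) + 1/δ + 1 := by linarith
      _ ≤ y/s := hydiv
      _ ≤ (n:ℝ) := hcle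
  have hn1 : 0 < (n:ℝ) := lt_of_lt_of_le h1δ0 hnδ
  have h1δ : 1 ≤ (n:ℝ) * δ := by
    rw [div_le_iff₀ hδ0] at hnδ
    linarith
  have hns0 : 0 < (n:ℝ)*s := by positivity
  have hAn := hN n hnN
  have hIb := (aux_bounds v hmono ((n:ℝ)*s) ((n:ℝ)*(s+1))
    (mul_pos hn1 hs0)
    (mul_le_mul_of_nonneg_left (by linarith) hn1.le)).2
  have hImul := mul_le_mul_of_nonneg_left hAn hn1.le
  rw [← mul_assoc, mul_inv_cancel₀ hn1.ne', one_mul] at hImul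
  have hcube : (((n:ℝ)*(s+1))^3 - ((n:ℝ)*s)^3)/3 = (n:ℝ)^3 * d := by
    rw [hd]; ring
  rw [hcube] at hIb
  have h3 : (n:ℝ)*(ℓ-δ) ≤ v ((n:ℝ)*s) * ((n:ℝ)^3 * d) := le_trans hImul hIb
  have key : ℓ - δ ≤ v ((n:ℝ)*s) * ((n:ℝ)^2 * d) := by
    have h4 : (ℓ-δ) * (n:ℝ) ≤ (v ((n:ℝ)*s) * ((n:ℝ)^2*d)) * (n:ℝ) := by
      have heq : (v ((n:ℝ)*s) * ((n:ℝ)^2*d)) * (n:ℝ)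
          = v ((n:ℝ)*s) * ((n:ℝ)^3*d) := by ring
      rw [heq]
      linarith
    exact le_of_mul_le_mul_right h4 hn1
  have hv_y : v ((n:ℝ)*s) ≤ v y := hmono hy0 h1
  have hn1' : (1:ℝ) ≤ (n:ℝ) := by
    have : 1 ≤ 1/δ := by
      rw [le_div_iff₀ hδ0]; linarith
    linarith
  have hy2 : (((n:ℝ)-1)*s)^2 ≤ y^2 :=
    pow_le_pow_left₀ (mul_nonneg (by linarith) hs0.le) h2 2
  have step1 : (((n:ℝ)-1)*s)^2 * v ((n:ℝ)*s) ≤ y^2 * v y :=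
    mul_le_mul hy2 hv_y (hnonneg _) (sq_nonneg y)
  have hle : (1-δ)*(n:ℝ) ≤ (n:ℝ)-1 := by
    have e : (1-δ)*(n:ℝ) = (n:ℝ) - (n:ℝ)*δ := by ring
    linarith only [e, h1δ]
  have ha : ((1-δ)*(n:ℝ))^2 ≤ ((n:ℝ)-1)^2 :=
    pow_le_pow_left₀ (mul_nonneg (by linarith) hn1.le) hle 2
  have hfac : (1-δ)^3 * ((n:ℝ)^2 * d) ≤ (((n:ℝ)-1)*s)^2 := by
    have hmm := mul_le_mul ha hs2 (mul_nonneg (by linarith) hd0.le) (sq_nonneg _)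
    calc (1-δ)^3 * ((n:ℝ)^2 * d) = ((1-δ)*(n:ℝ))^2 * ((1-δ)*d) := by ring
      _ ≤ ((n:ℝ)-1)^2 * s^2 := hmm
      _ = (((n:ℝ)-1)*s)^2 := by ring
  have step2 : (1-δ)^3 * (ℓ-δ) ≤ (((n:ℝ)-1)*s)^2 * v ((n:ℝ)*s) := by
    have h1δ3 : (0:ℝ) ≤ (1-δ)^3 := by
      apply pow_nonneg; linarith
    calc (1-δ)^3 * (ℓ-δ) ≤ (1-δ)^3 * (v ((n:ℝ)*s) * ((n:ℝ)^2*d)) :=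
          mul_le_mul_of_nonneg_left key h1δ3
      _ = ((1-δ)^3 * ((n:ℝ)^2 * d)) * v ((n:ℝ)*s) := by ring
      _ ≤ (((n:ℝ)-1)*s)^2 * v ((n:ℝ)*s) :=
          mul_le_mul_of_nonneg_right hfac (hnonneg _)
  have final : ℓ - ε ≤ (1-δ)^3 * (ℓ-δ) := by
    have hcub : 1 - 3*δ ≤ (1-δ)^3 := by
      have e : (1-δ)^3 - (1 - 3*δ) = δ^2*(3-δ) := by ring
      have h0 : 0 ≤ δ^2*(3-δ) := mul_nonneg (sq_nonneg δ) (by linarith only [hδ1])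
      linarith only [e, h0]
    have hmul : (1 - 3*δ) * (ℓ-δ) ≤ (1-δ)^3 * (ℓ-δ) :=
      mul_le_mul_of_nonneg_right hcub (by linarith only [hδℓ])
    have e2 : (1 - 3*δ)*(ℓ-δ) = ℓ - δ*(3*ℓ+1) + 3*δ^2 := by ring
    linarith only [hmul, e2, hδε, sq_nonneg δ]
  linarith

theorem stmt_2 (v : ℝ → ℝ) (M : ℝ) (hbdd : ∀ y, |v y| ≤ M)
    (hnonneg : ∀ y, 0 ≤ v y) (heven : ∀ y, v (-y) = v y)
    (hmono : ∀ ⦃x y : ℝ⦄, 0 < x → x ≤ y → v y ≤ v x)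
    (ℓ : ℝ) (hℓ : 0 < ℓ)
    (hlim : ∀ x₀ : ℝ, 1/2 < x₀ →
      Tendsto (fun n : ℕ =>
          (n : ℝ)⁻¹ * ∫ y in ((n : ℝ) * (x₀ - 1/2))..((n : ℝ) * (x₀ + 1/2)), y^2 * v y)
        atTop (nhds ℓ)) :
    Tendsto (fun y : ℝ => y^2 * v y) (atBot ⊔ atTop) (nhds ℓ) := by
  have htop : Tendsto (fun y : ℝ => y^2 * v y) atTop (nhds ℓ) := by
    refine tendsto_order.2 ⟨?_, ?_⟩
    · intro a hal
      have h := aux_lower v hnonneg hmono ℓ hℓ hlim ((ℓ - a)/2) (by linarith)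
      exact h.mono fun y hy => by linarith
    · intro a hal
      have h := aux_upper v hnonneg hmono ℓ hℓ hlim ((a - ℓ)/2) (by linarith)
      exact h.mono fun y hy => by linarith
  have hbot : Tendsto (fun y : ℝ => y^2 * v y) atBot (nhds ℓ) := by
    have h := htop.comp tendsto_neg_atBot_atTop
    refine h.congr fun y => ?_
    simp only [Function.comp_apply, heven, neg_sq]
  rw [tendsto_sup]
  exact ⟨hbot, htop⟩
end

section
/- Let v be as in the previous context (non-negative, even, non-increasing on (0,∞)) and suppose for all x₀ > 1/2 that lim_{n→∞} n⁻¹ ∫_{n(x₀−1/2)}^{n(x₀+1/2)} y² v(y) dy = ℓ. Then for every x₀ > 1/2, limsup_{n→∞} n²(x₀+1/2)² v(n(x₀+1/2)) ≤ ℓ ((x₀+1/2)/(x₀−1/2))². -/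
open Filter MeasureTheory

/-! With `a = x₀ + 1/2`, `b = x₀ - 1/2` (so `a - b = 1`), monotonicity gives
`y² v(y) ≥ (n b)² v(n a)` on `[n b, n a]`, so `n⁻¹ ∫_{nb}^{na} y² v(y) dy ≥ n² b² v(n a)`.
Multiplying by `(a / b)²` and passing to the limsup gives the bound. -/

lemma sub_mul_sq_mul_le_integral_sq_mul {v : ℝ → ℝ} {b a : ℝ} (hb : 0 ≤ b) (hba : b ≤ a)
    (hv : AntitoneOn v (Set.Icc b a)) (hva : 0 ≤ v a) :
    (a - b) * (b ^ 2 * v a) ≤ ∫ y in b..a, y ^ 2 * v y := by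
  have hvint : IntervalIntegrable v volume b a :=
    AntitoneOn.intervalIntegrable (by rwa [Set.uIcc_of_le hba])
  have hint : IntervalIntegrable (fun y => y ^ 2 * v y) volume b a :=
    hvint.continuousOn_mul (continuous_pow 2).continuousOn
  have hmono := intervalIntegral.integral_mono_on hba intervalIntegrable_const hint
    fun y hy => mul_le_mul (pow_le_pow_left₀ hb hy.1 2)
      (hv hy ⟨hba, le_rfl⟩ hy.2) hva (sq_nonneg y)
  rwa [intervalIntegral.integral_const, smul_eq_mul] at hmono

lemma sq_mul_sq_mul_le_inv_mul_integral {v : ℝ → ℝ} (hnonneg : ∀ y, 0 ≤ v y)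
    (hmono : ∀ ⦃x y : ℝ⦄, 0 < x → x ≤ y → v y ≤ v x) {a b : ℝ} (hb : 0 < b) (hab : a - b = 1)
    {n : ℕ} (hn : 1 ≤ n) :
    (n : ℝ) ^ 2 * a ^ 2 * v (n * a)
      ≤ (a / b) ^ 2 * ((n : ℝ)⁻¹ * ∫ y in (n * b)..(n * a), y ^ 2 * v y) := by
  have hn0 : (0 : ℝ) < n := by exact_mod_cast hn
  have hnb : 0 < (n : ℝ) * b := mul_pos hn0 hb
  have hlow := sub_mul_sq_mul_le_integral_sq_mul hnb.le
    (mul_le_mul_of_nonneg_left (by linarith) hn0.le)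
    (fun x hx y _ hxy => hmono (hnb.trans_le hx.1) hxy) (hnonneg (n * a))
  have hwidth : (n : ℝ) * a - n * b = n := by rw [← mul_sub, hab, mul_one]
  calc (n : ℝ) ^ 2 * a ^ 2 * v (n * a)
      = (a / b) ^ 2 * ((n : ℝ)⁻¹ * ((n * a - n * b) * ((n * b) ^ 2 * v (n * a)))) := by
        rw [hwidth]; field_simp
    _ ≤ (a / b) ^ 2 * ((n : ℝ)⁻¹ * ∫ y in (n * b)..(n * a), y ^ 2 * v y) := by gcongr

theorem stmt_3_general (v : ℝ → ℝ)
    (hnonneg : ∀ y, 0 ≤ v y)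
    (hmono : ∀ ⦃x y : ℝ⦄, 0 < x → x ≤ y → v y ≤ v x)
    (ℓ : ℝ)
    (hlim : ∀ x₀ : ℝ, 1/2 < x₀ →
      Tendsto (fun n : ℕ =>
          (n : ℝ)⁻¹ * ∫ y in ((n : ℝ) * (x₀ - 1/2))..((n : ℝ) * (x₀ + 1/2)), y^2 * v y)
        atTop (nhds ℓ)) :
    ∀ x₀ : ℝ, 1/2 < x₀ →
      Filter.limsup (fun n : ℕ => (n : ℝ)^2 * (x₀ + 1/2)^2 * v ((n : ℝ) * (x₀ + 1/2))) atTop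
        ≤ ℓ * ((x₀ + 1/2) / (x₀ - 1/2))^2 := by
  intro x₀ hx₀
  have hT := (hlim x₀ hx₀).const_mul (((x₀ + 1/2) / (x₀ - 1/2)) ^ 2)
  have hbound : ∀ᶠ n : ℕ in atTop, (n : ℝ) ^ 2 * (x₀ + 1/2) ^ 2 * v (n * (x₀ + 1/2))
      ≤ ((x₀ + 1/2) / (x₀ - 1/2)) ^ 2 *
        ((n : ℝ)⁻¹ * ∫ y in (n * (x₀ - 1/2))..(n * (x₀ + 1/2)), y ^ 2 * v y) :=
    eventually_atTop.2 ⟨1, fun n hn =>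
      sq_mul_sq_mul_le_inv_mul_integral hnonneg hmono (by linarith) (by ring) hn⟩
  have hcobdd : IsCoboundedUnder (· ≤ ·) atTop
      fun n : ℕ => (n : ℝ) ^ 2 * (x₀ + 1/2) ^ 2 * v (n * (x₀ + 1/2)) :=
    isCoboundedUnder_le_of_le atTop fun n => mul_nonneg (by positivity) (hnonneg _)
  calc _ ≤ _ := limsup_le_limsup hbound hcobdd hT.isBoundedUnder_le
    _ = ℓ * ((x₀ + 1/2) / (x₀ - 1/2)) ^ 2 := by rw [hT.limsup_eq, mul_comm]

theorem stmt_3 (v : ℝ → ℝ) (M : ℝ) (hbdd : ∀ y, |v y| ≤ M)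
    (hnonneg : ∀ y, 0 ≤ v y) (heven : ∀ y, v (-y) = v y)
    (hmono : ∀ ⦃x y : ℝ⦄, 0 < x → x ≤ y → v y ≤ v x)
    (ℓ : ℝ) (hℓ : 0 < ℓ)
    (hlim : ∀ x₀ : ℝ, 1/2 < x₀ →
      Tendsto (fun n : ℕ =>
          (n : ℝ)⁻¹ * ∫ y in ((n : ℝ) * (x₀ - 1/2))..((n : ℝ) * (x₀ + 1/2)), y^2 * v y)
        atTop (nhds ℓ)) :
    ∀ x₀ : ℝ, 1/2 < x₀ →
      Filter.limsup (fun n : ℕ => (n : ℝ)^2 * (x₀ + 1/2)^2 * v ((n : ℝ) * (x₀ + 1/2))) atTop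
        ≤ ℓ * ((x₀ + 1/2) / (x₀ - 1/2))^2 :=
  stmt_3_general v hnonneg hmono ℓ hlim
end

section
/- Let u ∈ L^∞(ℝ) be non-decreasing, odd, and convex on (−∞,0), and let r > 0. Then for all R > r, ∫_{|x|>R} ∫_{|z|≤r} |u(x+z) − u(x) − u_x(x)z| |z|^{−2} dz dx ≤ 4r ‖u‖_∞ (R − r)^{−1}. -/
/-!
For `|x| > r ≥ |z|` the points `x`, `x ± z` lie on one side of `0`, where `u` is convex
(`x < 0`) or, by oddness, concave (`x > 0`). At every point of differentiability (almost every
`x`, as `u` is monotone) the tangent line therefore bounds the Taylor remainder by the central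
second difference `|u (x + z) + u (x - z) - 2 u x|`. After Tonelli, for fixed `z` the integral of
the second difference over `x > R` telescopes to at most `∫_R^{R+|z|} (u x - u (x - |z|)) dx`,
and concavity together with `u ≥ 0` on `(0, ∞)` bounds that integrand by `|z| M / (R - r)`.
Each `z` thus contributes at most `2 M / (R - r)` (both half-lines), and integrating over
`|z| ≤ r` gives `4 r M / (R - r)`.
-/

open MeasureTheory Set Filter

def centralSecondDiff (f : ℝ → ℝ) (h x : ℝ) : ℝ := f (x + h) + f (x - h) - 2 * f x

lemma centralSecondDiff_neg_left (f : ℝ → ℝ) (h x : ℝ) :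
    centralSecondDiff f (-h) x = centralSecondDiff f h x := by
  simp only [centralSecondDiff, sub_neg_eq_add, ← sub_eq_add_neg]; ring

lemma centralSecondDiff_abs_left (f : ℝ → ℝ) (h x : ℝ) :
    centralSecondDiff f |h| x = centralSecondDiff f h x := by
  rcases abs_choice h with hh | hh <;> rw [hh]
  exact centralSecondDiff_neg_left f h x

lemma centralSecondDiff_neg_right {f : ℝ → ℝ} (hodd : ∀ x, f (-x) = -f x) (h x : ℝ) :
    centralSecondDiff f h (-x) = -centralSecondDiff f h x := by
  simp only [centralSecondDiff, show -x + h = -(x - h) by ring, show -x - h = -(x + h) by ring,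
    hodd]
  ring

section Convex

variable {S : Set ℝ} {f : ℝ → ℝ} {x y h : ℝ}

lemma ConvexOn.add_deriv_mul_sub_le (hf : ConvexOn ℝ S f) (hx : x ∈ S) (hy : y ∈ S)
    (hd : DifferentiableAt ℝ f x) : f x + deriv f x * (y - x) ≤ f y := by
  rcases lt_trichotomy x y with hxy | rfl | hxy
  · have := hf.deriv_le_slope hx hy hxy hd
    rw [slope_def_field, le_div_iff₀ (sub_pos.2 hxy)] at this
    linarith
  · simp
  · have := hf.slope_le_deriv hy hx hxy hd
    rw [slope_def_field, div_le_iff₀ (sub_pos.2 hxy)] at this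
    linarith

lemma ConvexOn.abs_sub_sub_deriv_mul_le (hf : ConvexOn ℝ S f) (hx : x ∈ S) (hxp : x + h ∈ S)
    (hxm : x - h ∈ S) (hd : DifferentiableAt ℝ f x) :
    |f (x + h) - f x - deriv f x * h| ≤ centralSecondDiff f h x := by
  have hp := hf.add_deriv_mul_sub_le hx hxp hd
  have hm := hf.add_deriv_mul_sub_le hx hxm hd
  rw [abs_of_nonneg (by linarith), centralSecondDiff]
  linarith

lemma ConcaveOn.abs_sub_sub_deriv_mul_le (hf : ConcaveOn ℝ S f) (hx : x ∈ S) (hxp : x + h ∈ S)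
    (hxm : x - h ∈ S) (hd : DifferentiableAt ℝ f x) :
    |f (x + h) - f x - deriv f x * h| ≤ -centralSecondDiff f h x := by
  have := hf.neg.abs_sub_sub_deriv_mul_le hx hxp hxm hd.neg
  rw [deriv.neg, ← abs_neg] at this
  simp only [centralSecondDiff, Pi.neg_apply] at this ⊢
  convert this using 2 <;> ring

lemma ConcaveOn.centralSecondDiff_nonpos (hf : ConcaveOn ℝ S f) (hxp : x + h ∈ S)
    (hxm : x - h ∈ S) : centralSecondDiff f h x ≤ 0 := by
  have := hf.2 hxp hxm (by norm_num : (0 : ℝ) ≤ 1 / 2) (by norm_num : (0 : ℝ) ≤ 1 / 2)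
    (by norm_num)
  simp only [smul_eq_mul, show 1 / 2 * (x + h) + 1 / 2 * (x - h) = x by ring] at this
  rw [centralSecondDiff]
  linarith

lemma ConcaveOn.sub_le_mul_div {M c s w : ℝ} (hf : ConcaveOn ℝ (Ioi 0) f)
    (hnonneg : ∀ x ∈ Ioi 0, 0 ≤ f x) (hM : f s ≤ M) (hc : 0 < c) (hcs : c < s) (hw : 0 ≤ w) :
    f (s + w) - f s ≤ w * M / c := by
  rcases hw.eq_or_lt with rfl | hw
  · simp
  -- the chord of `f` over `[s - c, s]` has slope at most `M / c`, as `0 ≤ f (s - c)`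
  have hslope := hf.slope_anti_adjacent (x := s - c) (y := s) (z := s + w)
    (by simpa using hcs) (by rw [mem_Ioi]; linarith) (by linarith) (by linarith)
  have hfε := hnonneg (s - c) (by simpa using hcs)
  rw [show s + w - s = w by ring, show s - (s - c) = c by ring, div_le_div_iff₀ hw hc] at hslope
  rw [le_div_iff₀ hc]
  nlinarith

end Convex

lemma concaveOn_Ioi_of_odd {u : ℝ → ℝ} (hodd : ∀ x, u (-x) = -u x)
    (hconv : ConvexOn ℝ (Iio 0) u) : ConcaveOn ℝ (Ioi 0) u := by
  have hs : (-LinearMap.id : ℝ →ₗ[ℝ] ℝ) ⁻¹' Iio 0 = Ioi 0 := by ext x; simp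
  have hu : -(u ∘ (-LinearMap.id : ℝ →ₗ[ℝ] ℝ)) = u := by ext x; simp [hodd]
  simpa only [hs, hu] using (hconv.comp_linearMap (-LinearMap.id)).neg

lemma intervalIntegral.integral_sub_comp_add_right {g : ℝ → ℝ}
    (hg : ∀ a b, IntervalIntegrable g volume a b) (a b w : ℝ) :
    ∫ x in a..b, (g x - g (x + w)) = (∫ x in a..a + w, g x) - ∫ x in b..b + w, g x := by
  have hshift : IntervalIntegrable (fun x => g (x + w)) volume a b := by
    simpa using (hg (a + w) (b + w)).comp_add_right w
  rw [intervalIntegral.integral_sub (hg a b) hshift,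
    intervalIntegral.integral_comp_add_right g w,
    intervalIntegral.integral_interval_sub_interval_comm (hg _ _) (hg _ _) (hg _ _)]

lemma lintegral_Ioi_ofReal_le_of_intervalIntegral_le {f : ℝ → ℝ} {a C : ℝ} (hf : Measurable f)
    (hfi : ∀ b, IntervalIntegrable f volume a b) (hnonneg : ∀ x ∈ Ioi a, 0 ≤ f x)
    (hC : ∀ b, a ≤ b → ∫ x in a..b, f x ≤ C) :
    ∫⁻ x in Ioi a, ENNReal.ofReal (f x) ≤ ENNReal.ofReal C := by
  have hcover : AECover (volume.restrict (Ioi a)) atTop Iic := aecover_Iic tendsto_id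
  rw [← hcover.iSup_lintegral_eq_of_countably_generated hf.ennreal_ofReal.aemeasurable]
  refine iSup_le fun b => ?_
  rw [Measure.restrict_restrict measurableSet_Iic, Iic_inter_Ioi]
  rcases le_or_gt a b with hab | hba
  · rw [← ofReal_integral_eq_lintegral_ofReal ((hfi b).1)
      ((ae_restrict_iff' measurableSet_Ioc).2 (ae_of_all _ fun x hx => hnonneg x hx.1)),
      ← intervalIntegral.integral_of_le hab]
    exact ENNReal.ofReal_le_ofReal (hC b hab)
  · simp [Ioc_eq_empty_of_le hba.le]

lemma setLIntegral_Iio_neg (f : ℝ → ENNReal) (R : ℝ) :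
    ∫⁻ x in Iio (-R), f x = ∫⁻ x in Ioi R, f (-x) := by
  rw [← (Measure.measurePreserving_neg volume).setLIntegral_comp_preimage_emb
    (Homeomorph.neg ℝ).measurableEmbedding f (Iio (-R))]
  simp

lemma integral_integral_le_of_lintegral_lintegral_enorm_le {α β : Type*} [MeasurableSpace α]
    [MeasurableSpace β] {μ : Measure α} {ν : Measure β} {f : α → β → ℝ} {C : ℝ} (hC : 0 ≤ C)
    (h : ∫⁻ x, ∫⁻ y, ‖f x y‖ₑ ∂ν ∂μ ≤ ENNReal.ofReal C) : ∫ x, ∫ y, f x y ∂ν ∂μ ≤ C := by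
  have hle : ‖∫ x, ∫ y, f x y ∂ν ∂μ‖ₑ ≤ ENNReal.ofReal C :=
    (enorm_integral_le_lintegral_enorm _).trans
      ((lintegral_mono fun x => enorm_integral_le_lintegral_enorm _).trans h)
  rw [Real.enorm_eq_ofReal_abs, ENNReal.ofReal_le_ofReal_iff hC] at hle
  exact (le_abs_self _).trans hle

lemma lintegral_Ioi_abs_centralSecondDiff_le {u : ℝ → ℝ} {M R w : ℝ}
    (hconc : ConcaveOn ℝ (Ioi 0) u) (hmono : Monotone u) (hu0 : 0 ≤ u 0) (hM : ∀ x, u x ≤ M)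
    (hw : 0 ≤ w) (hwR : w < R) :
    ∫⁻ x in Ioi R, ENNReal.ofReal |centralSecondDiff u w x| ≤
      ENNReal.ofReal (w ^ 2 * M / (R - w)) := by
  set g : ℝ → ℝ := fun x => u x - u (x - w)
  have hg : ∀ a b, IntervalIntegrable g volume a b := fun a b =>
    hmono.intervalIntegrable.sub <| by
      simpa using (hmono.intervalIntegrable (a := a - w) (b := b - w)).comp_sub_right w
  have hD : ∀ x ∈ Ioi R, |centralSecondDiff u w x| = g x - g (x + w) := by
    intro x hx
    have hx : R < x := hx
    have hxp : x + w ∈ Ioi 0 := by rw [mem_Ioi]; linarith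
    have hxm : x - w ∈ Ioi 0 := by rw [mem_Ioi]; linarith
    rw [abs_of_nonpos (hconc.centralSecondDiff_nonpos hxp hxm)]
    simp only [g, centralSecondDiff, add_sub_cancel_right]
    ring
  rw [setLIntegral_congr_fun measurableSet_Ioi fun x hx => by rw [hD x hx]]
  have hu := hmono.measurable
  refine lintegral_Ioi_ofReal_le_of_intervalIntegral_le (by fun_prop)
    (fun b => (hg R b).sub (by simpa using (hg (R + w) (b + w)).comp_add_right w))
    (fun x hx => hD x hx ▸ abs_nonneg _) fun b hRb => ?_
  rw [intervalIntegral.integral_sub_comp_add_right hg]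
  have htail : 0 ≤ ∫ x in b..b + w, g x :=
    intervalIntegral.integral_nonneg (by linarith) fun x _ => sub_nonneg.2 (hmono (by linarith))
  have hhead : ∫ x in R..R + w, g x ≤ ∫ x in R..R + w, w * M / (R - w) := by
    refine intervalIntegral.integral_mono_on_of_le_Ioo (by linarith) (hg _ _) (by simp)
      fun x hx => ?_
    have := hconc.sub_le_mul_div (fun y hy => hu0.trans (hmono (le_of_lt hy))) (hM (x - w))
      (sub_pos.2 hwR) (by linarith [hx.1]) hw
    simpa [g] using this
  rw [intervalIntegral.integral_const, smul_eq_mul, add_sub_cancel_left] at hhead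
  calc _ ≤ w * (w * M / (R - w)) := by linarith
    _ = w ^ 2 * M / (R - w) := by ring

section Odd

variable {u : ℝ → ℝ} {M : ℝ}

lemma abs_sub_sub_deriv_mul_le_of_odd (hodd : ∀ x, u (-x) = -u x)
    (hconv : ConvexOn ℝ (Iio 0) u) {r x z : ℝ} (hx : r < |x|) (hz : |z| ≤ r)
    (hd : DifferentiableAt ℝ u x) :
    |u (x + z) - u x - deriv u x * z| ≤ |centralSecondDiff u z x| := by
  obtain ⟨hz₁, hz₂⟩ := abs_le.1 hz
  rcases lt_abs.1 hx with hx | hx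
  · refine ((concaveOn_Ioi_of_odd hodd hconv).abs_sub_sub_deriv_mul_le ?_ ?_ ?_ hd).trans
      (neg_le_abs _) <;> simp only [mem_Ioi] <;> linarith
  · refine (hconv.abs_sub_sub_deriv_mul_le ?_ ?_ ?_ hd).trans (le_abs_self _) <;>
      simp only [mem_Iio] <;> linarith

lemma lintegral_abs_centralSecondDiff_le_of_odd (hbdd : ∀ x, |u x| ≤ M) (hmono : Monotone u)
    (hodd : ∀ x, u (-x) = -u x) (hconv : ConvexOn ℝ (Iio 0) u) {R z : ℝ} (hzR : |z| < R) :
    ∫⁻ x in {x | R < |x|}, ENNReal.ofReal |centralSecondDiff u z x| ≤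
      2 * ENNReal.ofReal (z ^ 2 * M / (R - |z|)) := by
  have hsplit : {x : ℝ | R < |x|} = Iio (-R) ∪ Ioi R := by
    ext x; simp only [mem_ofPred_eq, lt_abs, mem_union, mem_Iio, mem_Ioi, lt_neg]; tauto
  have hu0 : u 0 = 0 := by linarith [neg_zero (G := ℝ) ▸ hodd 0]
  have hhalf := lintegral_Ioi_abs_centralSecondDiff_le (concaveOn_Ioi_of_odd hodd hconv) hmono
    hu0.ge (fun x => (le_abs_self _).trans (hbdd x)) (abs_nonneg z) hzR
  simp_rw [centralSecondDiff_abs_left, sq_abs] at hhalf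
  calc _ ≤ (∫⁻ x in Iio (-R), ENNReal.ofReal |centralSecondDiff u z x|) +
        ∫⁻ x in Ioi R, ENNReal.ofReal |centralSecondDiff u z x| :=
        hsplit ▸ lintegral_union_le _ _ _
    _ = 2 * ∫⁻ x in Ioi R, ENNReal.ofReal |centralSecondDiff u z x| := by
        simp only [setLIntegral_Iio_neg, centralSecondDiff_neg_right hodd, abs_neg, two_mul]
    _ ≤ _ := by gcongr

lemma lintegral_abs_centralSecondDiff_div_sq_le_of_odd (hbdd : ∀ x, |u x| ≤ M)
    (hmono : Monotone u) (hodd : ∀ x, u (-x) = -u x) (hconv : ConvexOn ℝ (Iio 0) u)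
    {r R z : ℝ} (hz : |z| ≤ r) (hR : r < R) :
    ∫⁻ x in {x | R < |x|}, ENNReal.ofReal (|centralSecondDiff u z x| / z ^ 2) ≤
      ENNReal.ofReal (2 * M / (R - r)) := by
  have hM : 0 ≤ M := (abs_nonneg _).trans (hbdd 0)
  have hzR : |z| < R := hz.trans_lt hR
  simp_rw [div_eq_mul_inv, ENNReal.ofReal_mul (abs_nonneg _)]
  rw [lintegral_mul_const' _ _ ENNReal.ofReal_ne_top]
  grw [lintegral_abs_centralSecondDiff_le_of_odd hbdd hmono hodd hconv hzR]
  rw [← ENNReal.ofReal_ofNat, ← ENNReal.ofReal_mul zero_le_two,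
    ← ENNReal.ofReal_mul (by positivity)]
  refine ENNReal.ofReal_le_ofReal ?_
  rcases eq_or_ne z 0 with rfl | hz0
  · simpa using (show 0 ≤ 2 * M * (R - r)⁻¹ by positivity)
  · calc 2 * (z ^ 2 * M * (R - |z|)⁻¹) * (z ^ 2)⁻¹ = 2 * M * (R - |z|)⁻¹ := by field_simp
      _ ≤ 2 * M * (R - r)⁻¹ := by gcongr

end Odd

theorem stmt_12_general (u : ℝ → ℝ) (M : ℝ)
    (hbdd : ∀ x, |u x| ≤ M) (hmono : Monotone u) (hodd : ∀ x, u (-x) = -u x)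
    (hconv : ConvexOn ℝ (Set.Iio 0) u)
    (r R : ℝ) (hr : 0 < r) (hR : r < R) :
    ∫ x in {x : ℝ | R < |x|},
        ∫ z in {z : ℝ | |z| ≤ r}, |u (x + z) - u x - deriv u x * z| / z ^ 2
      ≤ 4 * r * M / (R - r) := by
  have hM : 0 ≤ M := (abs_nonneg _).trans (hbdd 0)
  have hu := hmono.measurable
  have hT : {z : ℝ | |z| ≤ r} = Icc (-r) r := by ext; simp [abs_le]
  refine integral_integral_le_of_lintegral_lintegral_enorm_le (by positivity) ?_
  calc _ ≤ ∫⁻ x in {x : ℝ | R < |x|}, ∫⁻ z in {z : ℝ | |z| ≤ r},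
        ENNReal.ofReal (|centralSecondDiff u z x| / z ^ 2) := by
        refine lintegral_mono_ae ?_
        filter_upwards [ae_restrict_of_ae hmono.ae_differentiableAt,
          ae_restrict_mem (measurableSet_lt measurable_const measurable_abs)] with x hd hx
        refine setLIntegral_mono' (hT ▸ measurableSet_Icc) fun z hz => ?_
        rw [Real.enorm_of_nonneg (by positivity)]
        exact ENNReal.ofReal_le_ofReal (div_le_div_of_nonneg_right
          (abs_sub_sub_deriv_mul_le_of_odd hodd hconv (hR.trans hx) hz hd) (sq_nonneg z))
    _ = ∫⁻ z in {z : ℝ | |z| ≤ r}, ∫⁻ x in {x : ℝ | R < |x|},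
        ENNReal.ofReal (|centralSecondDiff u z x| / z ^ 2) :=
        lintegral_lintegral_swap (by unfold centralSecondDiff; fun_prop)
    _ ≤ ∫⁻ z in {z : ℝ | |z| ≤ r}, ENNReal.ofReal (2 * M / (R - r)) :=
        setLIntegral_mono' (hT ▸ measurableSet_Icc) fun z hz =>
          lintegral_abs_centralSecondDiff_div_sq_le_of_odd hbdd hmono hodd hconv hz hR
    _ = ENNReal.ofReal (4 * r * M / (R - r)) := by
        rw [setLIntegral_const, hT, Real.volume_Icc, ← ENNReal.ofReal_mul (by positivity)]
        congr 1
        ring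

theorem stmt_12 (u : ℝ → ℝ) (M : ℝ)
    (hbdd : ∀ x, |u x| ≤ M) (hmono : Monotone u) (hodd : ∀ x, u (-x) = -u x)
    (hconv : ConvexOn ℝ (Set.Iio 0) u) (hcont : Continuous u)
    (r R : ℝ) (hr : 0 < r) (hR : r < R) :
    ∫ x in {x : ℝ | R < |x|},
        ∫ z in {z : ℝ | |z| ≤ r}, |u (x + z) - u x - deriv u x * z| / z ^ 2
      ≤ 4 * r * M / (R - r) :=
  stmt_12_general u M hbdd hmono hodd hconv r R hr hR
end

section
/- Let f, g : ℝ → ℝ with f odd, f(y) > 0 for all y > 0, f integrable, and g positive, even, strictly decreasing on (0,+∞), integrable. Then for all x > 0, the convolution (g ∗ f)(x) = ∫_ℝ g(x−y) f(y) dy > 0. -/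
/-!
Folding the integral onto `(0, ∞)` with the oddness of `f` gives
`(g ∗ f)(x) = ∫₀^∞ (g (x - y) - g (x + y)) f y dy`. For `x, y > 0` one has `|x - y| < x + y`,
so `g (x - y) > g (x + y)` because `g` is even and strictly decreasing on `(0, ∞)`; the integrand
is therefore positive except at `y = x`.
-/

open MeasureTheory Set

theorem integral_eq_setIntegral_Ioi_add_comp_neg {E : Type*} [NormedAddCommGroup E]
    [NormedSpace ℝ E] {F : ℝ → E} (hF : Integrable F) :
    ∫ y, F y = ∫ y in Ioi 0, (F y + F (-y)) := by
  rw [integral_add hF.integrableOn hF.comp_neg.integrableOn, integral_comp_neg_Ioi, neg_zero,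
    ← integral_add_compl measurableSet_Ioi hF, compl_Ioi]

theorem setIntegral_pos_of_ae_pos {X : Type*} [MeasurableSpace X] {μ : Measure X} {s : Set X}
    {f : X → ℝ} (hfi : IntegrableOn f s μ) (hf : ∀ᵐ x ∂μ.restrict s, 0 < f x) (hs : μ s ≠ 0) :
    0 < ∫ x in s, f x ∂μ := by
  rw [integral_pos_iff_support_of_nonneg_ae (hf.mono fun _ => le_of_lt) hfi]
  have hsupp : Function.support f =ᵐ[μ.restrict s] univ :=
    Filter.eventuallyEq_univ.mpr (hf.mono fun _ hx => hx.ne')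
  rwa [measure_congr hsupp, Measure.restrict_apply_univ, pos_iff_ne_zero]

theorem lt_of_abs_lt_of_even_of_strictAntiOn {g : ℝ → ℝ} (hg_even : ∀ x, g (-x) = g x)
    (hg_anti : StrictAntiOn g (Ioi 0)) {a b : ℝ} (ha : a ≠ 0) (hab : |a| < |b|) : g b < g a := by
  have hg_abs : ∀ x, g |x| = g x := fun x => by
    rcases abs_choice x with h | h <;> rw [h]
    exact hg_even x
  rw [← hg_abs a, ← hg_abs b]
  exact hg_anti (abs_pos.mpr ha) (abs_pos.mpr ha |>.trans hab) hab

theorem stmt_14_general (f g : ℝ → ℝ)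
    (hf_odd : ∀ y, f (-y) = -f y) (hf_pos : ∀ y : ℝ, 0 < y → 0 < f y)
    (hg_even : ∀ x, g (-x) = g x)
    (hg_anti : StrictAntiOn g (Set.Ioi 0))
    (hconv : ∀ x : ℝ, Integrable (fun y => g (x - y) * f y) volume) :
    ∀ x : ℝ, 0 < x → 0 < ∫ y : ℝ, g (x - y) * f y := by
  intro x hx
  have hF := hconv x
  have hfold : ∀ y, g (x - y) * f y + g (x - -y) * f (-y) = (g (x - y) - g (x + y)) * f y :=
    fun y => by rw [hf_odd, sub_neg_eq_add]; ring
  rw [integral_eq_setIntegral_Ioi_add_comp_neg hF]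
  simp only [hfold]
  refine setIntegral_pos_of_ae_pos ?_ ?_ (by simp)
  · exact (hF.integrableOn.add hF.comp_neg.integrableOn).congr_fun (fun y _ => hfold y)
      measurableSet_Ioi
  · filter_upwards [ae_restrict_mem measurableSet_Ioi, ae_restrict_of_ae (volume.ae_ne x)]
      with y (hy : 0 < y) hyx
    have hlt : |x - y| < |x + y| := by
      rw [abs_of_pos (by linarith : 0 < x + y), abs_lt]
      constructor <;> linarith
    exact mul_pos (sub_pos.mpr (lt_of_abs_lt_of_even_of_strictAntiOn hg_even hg_anti
      (sub_ne_zero.mpr hyx.symm) hlt)) (hf_pos y hy)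

theorem stmt_14 (f g : ℝ → ℝ)
    (hf_odd : ∀ y, f (-y) = -f y) (hf_pos : ∀ y : ℝ, 0 < y → 0 < f y)
    (hf_int : Integrable f volume)
    (hg_pos : ∀ x, 0 < g x) (hg_even : ∀ x, g (-x) = g x)
    (hg_anti : StrictAntiOn g (Set.Ioi 0)) (hg_int : Integrable g volume)
    (hconv : ∀ x : ℝ, Integrable (fun y => g (x - y) * f y) volume) :
    ∀ x : ℝ, 0 < x → 0 < ∫ y : ℝ, g (x - y) * f y :=
  stmt_14_general f g hf_odd hf_pos hg_even hg_anti hconv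
end
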